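/- Let G be a biextraspecial group, D₁ ≠ D₂ dents, and D₃ their diagonal dent. If [D₁,D₂] = 1 then the number of singular dents among {D₁,D₂,D₃} is odd (1 or 3); if [D₁,D₂] ≠ 1 then the number of non-singular dents among {D₁,D₂,D₃} is odd (1 or 3). -/

import Mathlib

/-!
Fix `g` of order 3 and `t` mapping to a transposition of `G ⧸ Q ≃* S₃`. As `g` acts
fixed-point-freely on `Z = Z(Q)`, it also does so on `Q / Z`, so `1 + g + g²` vanishes on `Q / Z`;
through the commutator pairing `Q / Z × Q / Z → Z` this shows that if `a` and `b` commute, so do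
`a` and `bᵍ`. A dent `D` is generated by `Z` and the conjugates of any `a ∈ D \ Z`; for `a` fixed
by `t` modulo `Z` these conjugates are the `aᵍⁱ` modulo `Z`. Hence `[D₁, D₂] = 1` iff `[a, b] = 1`,
dents are abelian, and `D` is singular iff `a² = 1`.

Write a `t`-fixed (modulo `Z`) element of `D₃ \ Z` as `ab` with `a ∈ D₁`, `b ∈ D₂`. Then
`(ab)² = [a, b] a² b²`, and all four factors lie in `C_Z(t)`, which has order at most 2 because `t`
acts nontrivially on `Z`; the parity statement is a count in a group of order at most 2.
-/

/-- The centre of the subgroup `Q`, viewed as a subgroup of the ambient group `G`. -/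
def centerOf (G : Type*) [Group G] (Q : Subgroup G) : Subgroup G :=
  Subgroup.centralizer (Q : Set G) ⊓ Q

open scoped commutatorElement

/-- A biextraspecial group of rank `m`: `G` is an extension of a special 2-group
`Q` of order `2^(2+2m)` by `L₂(2) ≅ S₃`, the centre `Z = Z(Q) ≅ 2²` is the natural
module (elementary abelian of order 4 with faithful induced `G/Q`-action), `Q/Z` is
elementary abelian, and every element of order 3 acts fixed-point-freely on `Q`
(equivalently, `Q/Z` has only natural composition factors). -/
structure IsBiextraspecial (G : Type*) [Group G] (Q : Subgroup G) (m : ℕ) : Prop where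
  normal : Q.Normal
  card_Q : Nat.card Q = 2 ^ (2 + 2 * m)
  quot_iso : Nonempty ((G ⧸ Q) ≃* Equiv.Perm (Fin 3))
  card_center : Nat.card (centerOf G Q) = 4
  center_exponent : ∀ z ∈ centerOf G Q, z * z = 1
  center_faithful : ∀ g : G, (∀ z ∈ centerOf G Q, g * z * g⁻¹ = z) → g ∈ Q
  sq_mem_center : ∀ q ∈ Q, q * q ∈ centerOf G Q
  comm_mem_center : ∀ q ∈ Q, ∀ r ∈ Q, ⁅q, r⁆ ∈ centerOf G Q
  order_three_fpf : ∀ g : G, orderOf g = 3 → ∀ q ∈ Q, g * q * g⁻¹ = q → q = 1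

/-- A dent: a normal subgroup `D` of `G` with `Z(Q) < D < Q` such that `D/Z` is an
irreducible `L`-submodule of `Q/Z` (i.e. `D` is minimal among normal subgroups
strictly containing `Z(Q)`). -/
structure IsDent (G : Type*) [Group G] (Q D : Subgroup G) : Prop where
  normal : D.Normal
  center_lt : centerOf G Q < D
  lt_Q : D < Q
  minimal : ∀ E : Subgroup G, E.Normal → centerOf G Q < E → E ≤ D → E = D

/-- `D₃` is the diagonal dent of the distinct dents `D₁` and `D₂`: the unique third
dent contained in `D₁D₂`. -/
def IsDiagonal (G : Type*) [Group G] (Q D₁ D₂ D₃ : Subgroup G) : Prop :=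
  IsDent G Q D₁ ∧ IsDent G Q D₂ ∧ IsDent G Q D₃ ∧
    D₁ ≠ D₂ ∧ D₃ ≠ D₁ ∧ D₃ ≠ D₂ ∧ D₃ ≤ D₁ ⊔ D₂

/-- Two subgroups commute elementwise, i.e. `[D₁, D₂] = 1`. -/
def DentsCommute (G : Type*) [Group G] (D₁ D₂ : Subgroup G) : Prop :=
  ∀ d₁ ∈ D₁, ∀ d₂ ∈ D₂, d₁ * d₂ = d₂ * d₁

/-- A dent is singular when it is elementary abelian (of type `2⁴`). -/
def IsSingularDent (G : Type*) [Group G] (D : Subgroup G) : Prop :=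
  ∀ d ∈ D, d * d = 1

/-- A standard basis `x, y` of a dent `D` with respect to `L = ⟨s, t⟩`:
`D = ⟨x, y, Z⟩` with `xᵗ = x`, `xˢ = y` and `yˢ = xy` (singular case) or
`yˢ = x⁻¹y⁻¹` (non-singular case). -/
structure StdBasis (G : Type*) [Group G] (Q : Subgroup G) (s t : G)
    (D : Subgroup G) (x y : G) : Prop where
  x_mem : x ∈ D
  x_notin : x ∉ centerOf G Q
  gen : D = centerOf G Q ⊔ Subgroup.closure {x, y}
  t_fix : t * x * t⁻¹ = x
  s_x : s * x * s⁻¹ = y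
  s_y : s * y * s⁻¹ = x * y ∨ s * y * s⁻¹ = x⁻¹ * y⁻¹

section GroupFacts

variable {G : Type*} [Group G]

theorem eq_of_ne_one_of_card_dvd_two {S : Subgroup G} (hS : Nat.card S ∣ 2) {u v : G}
    (hu : u ∈ S) (hv : v ∈ S) (hu1 : u ≠ 1) (hv1 : v ≠ 1) : u = v := by
  rcases (Nat.dvd_prime Nat.prime_two).mp hS with h | h
  · exact absurd (Subgroup.mem_bot.mp (S.eq_bot_of_card_eq h ▸ hu)) hu1
  · obtain ⟨y, -, hy⟩ := (Nat.card_eq_two_iff' (1 : S)).mp h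
    have huy := hy ⟨u, hu⟩ (by simpa [Subtype.ext_iff] using hu1)
    have hvy := hy ⟨v, hv⟩ (by simpa [Subtype.ext_iff] using hv1)
    exact congrArg Subtype.val (huy.trans hvy.symm)

theorem parity_of_mem_of_card_dvd_two {S : Subgroup G} (hS : Nat.card S ∣ 2) {c s₁ s₂ : G}
    (hc : c ∈ S) (h₁ : s₁ ∈ S) (h₂ : s₂ ∈ S) :
    (c = 1 →
      ((s₁ = 1 ∧ s₂ = 1 ∧ c * s₁ * s₂ = 1) ∨ (s₁ = 1 ∧ s₂ ≠ 1 ∧ c * s₁ * s₂ ≠ 1) ∨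
        (s₁ ≠ 1 ∧ s₂ = 1 ∧ c * s₁ * s₂ ≠ 1) ∨ (s₁ ≠ 1 ∧ s₂ ≠ 1 ∧ c * s₁ * s₂ = 1))) ∧
    (c ≠ 1 →
      ((s₁ ≠ 1 ∧ s₂ ≠ 1 ∧ c * s₁ * s₂ ≠ 1) ∨ (s₁ ≠ 1 ∧ s₂ = 1 ∧ c * s₁ * s₂ = 1) ∨
        (s₁ = 1 ∧ s₂ ≠ 1 ∧ c * s₁ * s₂ = 1) ∨ (s₁ = 1 ∧ s₂ = 1 ∧ c * s₁ * s₂ ≠ 1))) := by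
  have huniq {u v : G} : u ∈ S → v ∈ S → u ≠ 1 → v ≠ 1 → u = v :=
    eq_of_ne_one_of_card_dvd_two hS
  have hsq : ∀ u ∈ S, u * u = 1 := by
    intro u hu
    by_contra h
    have hu1 : u ≠ 1 := by rintro rfl; simp at h
    exact hu1 (mul_eq_left.mp (huniq (mul_mem hu hu) hu h hu1))
  constructor
  · rintro rfl
    rcases eq_or_ne s₁ 1 with rfl | h1 <;> rcases eq_or_ne s₂ 1 with rfl | h2
    · simp
    · simp [h2]
    · simp [h1]
    · rw [huniq h₂ h₁ h2 h1]
      simp [h1, hsq s₁ h₁]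
  · intro hc1
    rcases eq_or_ne s₁ 1 with rfl | h1 <;> rcases eq_or_ne s₂ 1 with rfl | h2
    · simp [hc1]
    · rw [huniq h₂ hc h2 hc1]
      simp [hc1, hsq c hc]
    · rw [huniq h₁ hc h1 hc1]
      simp [hc1, hsq c hc]
    · rw [huniq h₁ hc h1 hc1, huniq h₂ hc h2 hc1]
      simp [hc1, hsq c hc]

theorem commutatorElement_mem_of_normal {N : Subgroup G} [N.Normal] (t : G) {a : G}
    (ha : a ∈ N) : ⁅t, a⁆ ∈ N := by
  rw [commutatorElement_def]
  exact mul_mem (Subgroup.Normal.conj_mem inferInstance a ha t) (inv_mem ha)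

theorem commutatorElement_pow_mem {N : Subgroup G} [N.Normal] {t b : G} (h : ⁅t, b⁆ ∈ N) :
    ∀ j : ℕ, ⁅t ^ j, b⁆ ∈ N
  | 0 => by simp
  | j + 1 => by
    rw [pow_succ', commutatorElement_mul_left_eq_conj_mul]
    exact mul_mem (Subgroup.Normal.conj_mem inferInstance _ (commutatorElement_pow_mem h j) t) h

theorem mul_mul_self_eq_commutatorElement_mul {a b : G} (h : Commute (a * a) b) :
    a * b * (a * b) = ⁅a, b⁆ * (a * a) * (b * b) := by
  calc a * b * (a * b) = a * b * a⁻¹ * (a * a) * b := by group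
    _ = a * b * a⁻¹ * (b⁻¹ * (a * a) * b) * b := by
        rw [mul_assoc b⁻¹, h.eq, inv_mul_cancel_left]
    _ = ⁅a, b⁆ * (a * a) * (b * b) := by rw [commutatorElement_def]; group

theorem perm_fin_three_exists_involution : ∀ d : Equiv.Perm (Fin 3), d ^ 3 = 1 → d ≠ 1 →
    ∃ τ : Equiv.Perm (Fin 3), τ ≠ 1 ∧ τ * τ = 1 ∧ ∀ x, ∃ i < 3, ∃ j < 2, x = d ^ i * τ ^ j := by
  decide

end GroupFacts

theorem centerOf_le {G : Type*} [Group G] (Q : Subgroup G) : centerOf G Q ≤ Q := inf_le_right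

theorem commute_of_mem_centerOf {G : Type*} [Group G] {Q : Subgroup G} {q z : G} (hq : q ∈ Q)
    (hz : z ∈ centerOf G Q) : Commute q z :=
  Subgroup.mem_centralizer_iff.mp hz.1 q hq

namespace IsBiextraspecial

variable {G : Type*} [Group G] {Q : Subgroup G} {m : ℕ}

theorem centerOf_normal (hG : IsBiextraspecial G Q m) : (centerOf G Q).Normal := by
  have := hG.normal
  exact Subgroup.normal_inf_normal _ _

theorem commutatorElement_mul_right (hG : IsBiextraspecial G Q m) {p q r : G} (hp : p ∈ Q)
    (hq : q ∈ Q) (hr : r ∈ Q) : ⁅p, q * r⁆ = ⁅p, q⁆ * ⁅p, r⁆ := by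
  rw [commutatorElement_mul_right_eq_mul_conj, mul_assoc _ q,
    (commute_of_mem_centerOf hq (hG.comm_mem_center p hp r hr)).eq, mul_assoc,
    mul_inv_cancel_right]

theorem commutatorElement_mul_left (hG : IsBiextraspecial G Q m) {p q r : G} (hp : p ∈ Q)
    (hq : q ∈ Q) (hr : r ∈ Q) : ⁅p * q, r⁆ = ⁅p, r⁆ * ⁅q, r⁆ := by
  have hqr := hG.comm_mem_center q hq r hr
  rw [commutatorElement_mul_left_eq_conj_mul, (commute_of_mem_centerOf hp hqr).eq,
    mul_inv_cancel_right, (commute_of_mem_centerOf (centerOf_le Q hqr)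
      (hG.comm_mem_center p hp r hr)).eq]

theorem exists_commutatorElement_eq (hG : IsBiextraspecial G Q m) {g : G} (hg : orderOf g = 3)
    {z : G} (hz : z ∈ centerOf G Q) : ∃ w ∈ centerOf G Q, ⁅g, w⁆ = z := by
  have := hG.centerOf_normal
  have : Finite (centerOf G Q) := Nat.finite_of_card_ne_zero (by simp [hG.card_center])
  let f : centerOf G Q → centerOf G Q := fun w => ⟨⁅g, w⁆, commutatorElement_mem_of_normal g w.2⟩
  -- `w ↦ ⁅g, w⁆` is injective on `Z` because `g` fixes no nontrivial element of `Q`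
  have hf : Function.Injective f := by
    rintro ⟨w, hw⟩ ⟨w', hw'⟩ h
    have h' : ⁅g, w⁆ = ⁅g, w'⁆ := congrArg Subtype.val h
    have hfix : g * (w'⁻¹ * w) * g⁻¹ = w'⁻¹ * w :=
      calc g * (w'⁻¹ * w) * g⁻¹ = (g * w' * g⁻¹)⁻¹ * (⁅g, w⁆ * w) := by
            rw [commutatorElement_def]; group
        _ = w'⁻¹ * w := by rw [h', commutatorElement_def]; group
    have := hG.order_three_fpf g hg _
      (mul_mem (inv_mem (centerOf_le Q hw')) (centerOf_le Q hw)) hfix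
    exact Subtype.ext (inv_mul_eq_one.mp this).symm
  obtain ⟨⟨w, hw⟩, hfw⟩ := Finite.injective_iff_surjective.mp hf ⟨z, hz⟩
  exact ⟨w, hw, congrArg Subtype.val hfw⟩

theorem mem_centerOf_of_commutatorElement_mem (hG : IsBiextraspecial G Q m) {g q : G}
    (hg : orderOf g = 3) (hq : q ∈ Q) (h : ⁅g, q⁆ ∈ centerOf G Q) : q ∈ centerOf G Q := by
  obtain ⟨w, hw, hwq⟩ := hG.exists_commutatorElement_eq hg h
  have hfix : g * (w⁻¹ * q) * g⁻¹ = w⁻¹ * q :=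
    calc g * (w⁻¹ * q) * g⁻¹ = (⁅g, w⁆ * w)⁻¹ * (⁅g, q⁆ * q) := by
          simp only [commutatorElement_def]; group
      _ = w⁻¹ * q := by rw [hwq]; group
  have := hG.order_three_fpf g hg _ (mul_mem (inv_mem (centerOf_le Q hw)) hq) hfix
  rwa [← inv_mul_eq_one.mp this]

theorem mul_conj_mul_conj_mem_centerOf (hG : IsBiextraspecial G Q m) {g q : G}
    (hg : orderOf g = 3) (hq : q ∈ Q) :
    q * (g * q * g⁻¹) * (g * (g * q * g⁻¹) * g⁻¹) ∈ centerOf G Q := by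
  set u := q * (g * q * g⁻¹) * (g * (g * q * g⁻¹) * g⁻¹) with hu
  have hg3 : g * (g * (g * q * g⁻¹) * g⁻¹) * g⁻¹ = q := by
    have hg' : g * g * g = 1 := by rw [← pow_three', ← hg, pow_orderOf_eq_one]
    calc g * (g * (g * q * g⁻¹) * g⁻¹) * g⁻¹ = g * g * g * q * (g * g * g)⁻¹ := by group
      _ = q := by rw [hg']; group
  have huQ : u ∈ Q := mul_mem (mul_mem hq (hG.normal.conj_mem q hq g))
    (hG.normal.conj_mem _ (hG.normal.conj_mem q hq g) g)
  -- conjugating by `g` cycles the three factors of `u`, i.e. acts on `u` as conjugation by `q⁻¹`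
  have hcomm : ⁅g, u⁆ = ⁅q⁻¹, u⁆ :=
    calc ⁅g, u⁆ = (g * q * g⁻¹) * (g * (g * q * g⁻¹) * g⁻¹)
          * (g * (g * (g * q * g⁻¹) * g⁻¹) * g⁻¹) * u⁻¹ := by rw [commutatorElement_def, hu]; group
      _ = ⁅q⁻¹, u⁆ := by rw [hg3, commutatorElement_def, hu]; group
  exact hG.mem_centerOf_of_commutatorElement_mem hg huQ
    (hcomm ▸ hG.comm_mem_center _ (inv_mem hq) u huQ)

theorem commute_conj_right (hG : IsBiextraspecial G Q m) {g a b : G} (hg : orderOf g = 3)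
    (ha : a ∈ Q) (hb : b ∈ Q) (hab : Commute a b) : Commute a (g * b * g⁻¹) := by
  have hconj {q : G} (hq : q ∈ Q) : g * q * g⁻¹ ∈ Q := hG.normal.conj_mem q hq g
  set A := g * a * g⁻¹
  set B := g * b * g⁻¹
  set A' := g * A * g⁻¹
  set B' := g * B * g⁻¹
  have h₀₀ : ⁅a, b⁆ = 1 := commutatorElement_eq_one_iff_commute.mpr hab
  have h₂₂ : ⁅A', B'⁆ = 1 := by
    simp only [A', B', A, B, ← conjugate_commutatorElement, h₀₀, mul_one, mul_inv_cancel]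
  -- the norms `b B B'` and `a A A'` are central, so `⁅a, ·⁆` and `⁅·, B'⁆` kill them
  have hrow : ⁅a, B⁆ * ⁅a, B'⁆ = 1 := by
    have h := commutatorElement_eq_one_iff_commute.mpr
      (commute_of_mem_centerOf ha (hG.mul_conj_mul_conj_mem_centerOf hg hb))
    rwa [hG.commutatorElement_mul_right ha (mul_mem hb (hconj hb)) (hconj (hconj hb)),
      hG.commutatorElement_mul_right ha hb (hconj hb), h₀₀, one_mul] at h
  have hcol : ⁅a, B'⁆ * ⁅A, B'⁆ = 1 := by
    have h := commutatorElement_eq_one_iff_commute.mpr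
      (commute_of_mem_centerOf (hconj (hconj hb)) (hG.mul_conj_mul_conj_mem_centerOf hg ha)).symm
    rwa [hG.commutatorElement_mul_left (mul_mem ha (hconj ha)) (hconj (hconj ha))
        (hconj (hconj hb)),
      hG.commutatorElement_mul_left ha (hconj ha) (hconj (hconj hb)), h₂₂, mul_one] at h
  have hfix : g * ⁅a, B⁆ * g⁻¹ = ⁅a, B⁆ := by
    rw [conjugate_commutatorElement, eq_inv_of_mul_eq_one_left hrow,
      inv_eq_of_mul_eq_one_right hcol]
  exact commutatorElement_eq_one_iff_commute.mp
    (hG.order_three_fpf g hg _ (centerOf_le Q (hG.comm_mem_center a ha B (hconj hb))) hfix)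

theorem commute_conj_pow_right (hG : IsBiextraspecial G Q m) {g a b : G} (hg : orderOf g = 3)
    (ha : a ∈ Q) (hb : b ∈ Q) (hab : Commute a b) :
    ∀ n : ℕ, Commute a (g ^ n * b * (g ^ n)⁻¹)
  | 0 => by simpa using hab
  | n + 1 => by
    rw [show g ^ (n + 1) * b * (g ^ (n + 1))⁻¹ = g * (g ^ n * b * (g ^ n)⁻¹) * g⁻¹ by group]
    exact hG.commute_conj_right hg ha (hG.normal.conj_mem b hb _)
      (hG.commute_conj_pow_right hg ha hb hab n)

theorem exists_conj_eq_mul_conj_pow (hG : IsBiextraspecial G Q m) {g t b : G}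
    (hgen : ∀ γ : G, ∃ q ∈ Q, ∃ i j : ℕ, γ = q * g ^ i * t ^ j) (hb : b ∈ Q)
    (htb : ⁅t, b⁆ ∈ centerOf G Q) (δ : G) :
    ∃ i : ℕ, ∃ z ∈ centerOf G Q, δ * b * δ⁻¹ = z * (g ^ i * b * (g ^ i)⁻¹) := by
  have := hG.centerOf_normal
  obtain ⟨q, hq, i, j, rfl⟩ := hgen δ
  set w := g ^ i * b * (g ^ i)⁻¹
  refine ⟨i, q * (g ^ i * ⁅t ^ j, b⁆ * (g ^ i)⁻¹) * q⁻¹ * ⁅q, w⁆,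
    mul_mem (this.conj_mem _ (this.conj_mem _ (commutatorElement_pow_mem htb j) _) _)
      (hG.comm_mem_center q hq w (hG.normal.conj_mem b hb _)), ?_⟩
  simp only [w, commutatorElement_def]
  group

theorem commute_conj_conj (hG : IsBiextraspecial G Q m) {g t a b : G} (hg : orderOf g = 3)
    (hgen : ∀ γ : G, ∃ q ∈ Q, ∃ i j : ℕ, γ = q * g ^ i * t ^ j)
    (ha : a ∈ Q) (hb : b ∈ Q) (htb : ⁅t, b⁆ ∈ centerOf G Q) (hab : Commute a b) (γ δ : G) :
    Commute (γ * a * γ⁻¹) (δ * b * δ⁻¹) := by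
  obtain ⟨i, z, hz, h⟩ := hG.exists_conj_eq_mul_conj_pow hgen hb htb (γ⁻¹ * δ)
  have hcomm : Commute a (γ⁻¹ * δ * b * (γ⁻¹ * δ)⁻¹) :=
    h ▸ (commute_of_mem_centerOf ha hz).mul_right (hG.commute_conj_pow_right hg ha hb hab i)
  simpa [mul_assoc] using hcomm.map (MulAut.conj γ)

theorem card_centerOf_inf_centralizer_dvd_two (hG : IsBiextraspecial G Q m) {t : G}
    (ht : t ∉ Q) : Nat.card (centerOf G Q ⊓ Subgroup.centralizer {t} : Subgroup G) ∣ 2 := by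
  have : Finite (centerOf G Q) := Nat.finite_of_card_ne_zero (by simp [hG.card_center])
  have hle : centerOf G Q ⊓ Subgroup.centralizer {t} ≤ centerOf G Q := inf_le_left
  have hdvd := hG.card_center ▸ Subgroup.card_dvd_of_le hle
  have hne : Nat.card (centerOf G Q ⊓ Subgroup.centralizer {t} : Subgroup G) ≠ 4 := by
    intro h4
    have heq := Subgroup.eq_of_le_of_card_ge hle (by rw [h4, hG.card_center])
    refine ht (hG.center_faithful t fun z hz => ?_)
    have hzt : z ∈ centerOf G Q ⊓ Subgroup.centralizer {t} := by rw [heq]; exact hz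
    rw [← Subgroup.mem_centralizer_singleton_iff.mp hzt.2, mul_inv_cancel_right]
  have := Nat.le_of_dvd (by norm_num) hdvd
  interval_cases Nat.card (centerOf G Q ⊓ Subgroup.centralizer {t} : Subgroup G) <;> omega

theorem mul_self_mem_centralizer (hG : IsBiextraspecial G Q m) {t u : G} (hu : u ∈ Q)
    (htu : ⁅t, u⁆ ∈ centerOf G Q) : u * u ∈ Subgroup.centralizer {t} := by
  rw [Subgroup.mem_centralizer_singleton_iff, eq_comm, ← commutatorElement_eq_one_iff_mul_comm,
    commutatorElement_mul_right_eq_mul_conj, mul_assoc _ u, (commute_of_mem_centerOf hu htu).eq,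
    mul_assoc, mul_inv_cancel_right, hG.center_exponent _ htu]

theorem commutatorElement_mem_centralizer (hG : IsBiextraspecial G Q m) {t p q : G} (hp : p ∈ Q)
    (hq : q ∈ Q) (htp : ⁅t, p⁆ ∈ centerOf G Q) (htq : ⁅t, q⁆ ∈ centerOf G Q) :
    ⁅p, q⁆ ∈ Subgroup.centralizer {t} := by
  have hconj {u : G} : t * u * t⁻¹ = ⁅t, u⁆ * u := by rw [commutatorElement_def]; group
  have hq' : ⁅t, q⁆ * q ∈ Q := mul_mem (centerOf_le Q htq) hq
  have h : t * ⁅p, q⁆ * t⁻¹ = ⁅p, q⁆ := by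
    rw [conjugate_commutatorElement, hconj, hconj,
      hG.commutatorElement_mul_left (centerOf_le Q htp) hp hq',
      hG.commutatorElement_mul_right hp (centerOf_le Q htq) hq,
      commutatorElement_eq_one_iff_commute.mpr (commute_of_mem_centerOf hq' htp).symm,
      commutatorElement_eq_one_iff_commute.mpr (commute_of_mem_centerOf hp htq), one_mul, one_mul]
  exact Subgroup.mem_centralizer_singleton_iff.mpr (mul_inv_eq_iff_eq_mul.mp h).symm

theorem exists_generators (hG : IsBiextraspecial G Q m) :
    ∃ g t : G, orderOf g = 3 ∧ t ∉ Q ∧ t * t ∈ Q ∧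
      ∀ γ : G, ∃ q ∈ Q, ∃ i j : ℕ, γ = q * g ^ i * t ^ j := by
  have := hG.normal
  obtain ⟨e⟩ := hG.quot_iso
  set φ : G →* Equiv.Perm (Fin 3) := e.toMonoidHom.comp (QuotientGroup.mk' Q)
  have hφ (x : G) : φ x = 1 ↔ x ∈ Q := by simp [φ]
  have hφs : Function.Surjective φ := e.surjective.comp (QuotientGroup.mk'_surjective Q)
  have hcard : Nat.card G = 6 * 2 ^ (2 + 2 * m) := by
    rw [Subgroup.card_eq_card_quotient_mul_card_subgroup Q, Nat.card_congr e.toEquiv, hG.card_Q]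
    simp [Fintype.card_perm, Nat.factorial]
  have : Finite G := Nat.finite_of_card_ne_zero (by rw [hcard]; positivity)
  have : Fact (Nat.Prime 3) := ⟨Nat.prime_three⟩
  obtain ⟨g, hg⟩ := exists_prime_orderOf_dvd_card' 3 (hcard ▸ Dvd.dvd.mul_right (by norm_num) _)
  have hgQ : φ g ≠ 1 := by
    intro h
    have h3 := hG.card_Q ▸ hg ▸ Q.orderOf_dvd_natCard ((hφ g).mp h)
    exact absurd (Nat.Prime.dvd_of_dvd_pow Nat.prime_three h3) (by norm_num)
  have hg3 : g ^ 3 = 1 := hg ▸ pow_orderOf_eq_one g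
  obtain ⟨τ, hτ, hτ2, hdec⟩ := perm_fin_three_exists_involution (φ g)
    (by rw [← map_pow, hg3, map_one]) hgQ
  obtain ⟨t, rfl⟩ := hφs τ
  refine ⟨g, t, hg, fun h => hτ ((hφ t).mpr h), (hφ _).mp (by rw [map_mul, hτ2]), fun γ => ?_⟩
  obtain ⟨i, -, j, -, hij⟩ := hdec (φ γ)
  refine ⟨γ * (g ^ i * t ^ j)⁻¹, (hφ _).mp ?_, i, j, by group⟩
  rw [map_mul, map_inv, map_mul, map_pow, map_pow, hij, mul_inv_cancel]

end IsBiextraspecial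

namespace IsDent

variable {G : Type*} [Group G] {Q : Subgroup G} {m : ℕ}

theorem mem_centerOf_of_mem_of_mem {D₁ D₂ : Subgroup G} (hD₁ : IsDent G Q D₁)
    (hD₂ : IsDent G Q D₂) (hne : D₁ ≠ D₂) {d : G} (h₁ : d ∈ D₁) (h₂ : d ∈ D₂) :
    d ∈ centerOf G Q := by
  have := hD₁.normal
  have := hD₂.normal
  by_contra hd
  have hlt : centerOf G Q < D₁ ⊓ D₂ :=
    SetLike.lt_iff_le_and_exists.mpr
      ⟨le_inf hD₁.center_lt.le hD₂.center_lt.le, d, Subgroup.mem_inf.mpr ⟨h₁, h₂⟩, hd⟩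
  exact hne ((hD₁.minimal _ inferInstance hlt inf_le_left).symm.trans
    (hD₂.minimal _ inferInstance hlt inf_le_right))

theorem eq_closure (hG : IsBiextraspecial G Q m) {D : Subgroup G} (hD : IsDent G Q D) {a : G}
    (ha : a ∈ D) (haZ : a ∉ centerOf G Q) :
    D = Subgroup.closure ((centerOf G Q : Set G) ∪ Group.conjugatesOfSet {a}) := by
  have := hG.centerOf_normal
  have := hD.normal
  rw [Subgroup.closure_union, Subgroup.closure_eq]
  change D = centerOf G Q ⊔ Subgroup.normalClosure {a}
  refine (hD.minimal _ inferInstance ?_ (sup_le hD.center_lt.le ?_)).symm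
  · exact SetLike.lt_iff_le_and_exists.mpr
      ⟨le_sup_left, a, Subgroup.mem_sup_right (Subgroup.subset_normalClosure rfl), haZ⟩
  · exact Subgroup.normalClosure_le_normal (Set.singleton_subset_iff.mpr ha)

theorem le_centralizer (hG : IsBiextraspecial G Q m) {D : Subgroup G} (hD : IsDent G Q D) {a : G}
    (ha : a ∈ D) (haZ : a ∉ centerOf G Q) {S : Set G} (hSQ : S ⊆ Q)
    (hS : ∀ γ : G, ∀ s ∈ S, Commute s (γ * a * γ⁻¹)) : D ≤ Subgroup.centralizer S := by
  rw [hD.eq_closure hG ha haZ, Subgroup.closure_le]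
  rintro _ (hz | hc)
  · exact Subgroup.mem_centralizer_iff.mpr fun s hs => (commute_of_mem_centerOf (hSQ hs) hz).eq
  · obtain ⟨_, ha', hc⟩ := Group.mem_conjugatesOfSet_iff.mp hc
    obtain ⟨γ, rfl⟩ := isConj_iff.mp (Set.mem_singleton_iff.mp ha' ▸ hc)
    exact Subgroup.mem_centralizer_iff.mpr fun s hs => (hS γ s hs).eq

theorem exists_mem_commutatorElement_mem (hG : IsBiextraspecial G Q m) {t : G} (ht : t * t ∈ Q)
    {D : Subgroup G} (hD : IsDent G Q D) :
    ∃ x ∈ D, x ∉ centerOf G Q ∧ ⁅t, x⁆ ∈ centerOf G Q := by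
  have hZ := hG.centerOf_normal
  obtain ⟨d, hd, hdZ⟩ := SetLike.exists_of_lt hD.center_lt
  have hdQ : d ∈ Q := hD.lt_Q.le hd
  by_cases htd : ⁅t, d⁆ ∈ centerOf G Q
  · exact ⟨d, hd, hdZ, htd⟩
  set w := t * d * t⁻¹ with hw
  have hwD : w ∈ D := hD.normal.conj_mem d hd t
  have hwQ : w ∈ Q := hD.lt_Q.le hwD
  -- `t` swaps `d` and `w` modulo `Z`, since `t * t ∈ Q` acts trivially on `Q / Z`
  refine ⟨d * w, mul_mem hd hwD, fun h => htd ?_, ?_⟩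
  · rw [show ⁅t, d⁆ = d⁻¹ * (d * w) * d * (d * d)⁻¹ by rw [commutatorElement_def, hw]; group]
    exact mul_mem (hZ.conj_mem' _ h d) (inv_mem (hG.sq_mem_center d hdQ))
  · rw [show ⁅t, d * w⁆ = w * ⁅t * t, d⁆ * w⁻¹ * ⁅w, d⁆ by
      simp only [commutatorElement_def, hw]; group]
    exact mul_mem (hZ.conj_mem _ (hG.comm_mem_center _ ht d hdQ) w)
      (hG.comm_mem_center w hwQ d hdQ)

theorem dentsCommute_of_commute (hG : IsBiextraspecial G Q m) {g t : G} (hg : orderOf g = 3)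
    (hgen : ∀ γ : G, ∃ q ∈ Q, ∃ i j : ℕ, γ = q * g ^ i * t ^ j) {D₁ D₂ : Subgroup G}
    (hD₁ : IsDent G Q D₁) (hD₂ : IsDent G Q D₂) {a b : G} (ha : a ∈ D₁)
    (haZ : a ∉ centerOf G Q) (hb : b ∈ D₂) (hbZ : b ∉ centerOf G Q)
    (htb : ⁅t, b⁆ ∈ centerOf G Q) (hab : Commute a b) : DentsCommute G D₁ D₂ := by
  have haQ := hD₁.lt_Q.le ha
  have hle : D₁ ≤ Subgroup.centralizer D₂ := by
    refine hD₁.le_centralizer hG ha haZ (fun d hd => hD₂.lt_Q.le hd) fun γ d hd => ?_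
    have hγ : D₂ ≤ Subgroup.centralizer {γ * a * γ⁻¹} :=
      hD₂.le_centralizer hG hb hbZ (Set.singleton_subset_iff.mpr (hG.normal.conj_mem a haQ γ))
        fun δ _ hs => hs ▸ hG.commute_conj_conj hg hgen haQ (hD₂.lt_Q.le hb) htb hab γ δ
    exact Subgroup.mem_centralizer_singleton_iff.mp (hγ hd)
  exact fun d₁ hd₁ d₂ hd₂ => (Subgroup.mem_centralizer_iff.mp (hle hd₁) d₂ hd₂).symm

theorem isSingularDent_iff (hG : IsBiextraspecial G Q m) {g t : G} (hg : orderOf g = 3)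
    (hgen : ∀ γ : G, ∃ q ∈ Q, ∃ i j : ℕ, γ = q * g ^ i * t ^ j) {D : Subgroup G}
    (hD : IsDent G Q D) {a : G} (ha : a ∈ D) (haZ : a ∉ centerOf G Q)
    (hta : ⁅t, a⁆ ∈ centerOf G Q) : IsSingularDent G D ↔ a * a = 1 := by
  refine ⟨fun h => h a ha, fun ha2 => ?_⟩
  have hcomm := hD.dentsCommute_of_commute hG hg hgen hD ha haZ ha haZ hta (Commute.refl a)
  rw [hD.eq_closure hG ha haZ] at hcomm ⊢
  intro d hd
  induction hd using Subgroup.closure_induction with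
  | mem x hx =>
    rcases hx with hz | hc
    · exact hG.center_exponent x hz
    · obtain ⟨_, ha', hc⟩ := Group.mem_conjugatesOfSet_iff.mp hc
      obtain ⟨γ, rfl⟩ := isConj_iff.mp (Set.mem_singleton_iff.mp ha' ▸ hc)
      rw [show γ * a * γ⁻¹ * (γ * a * γ⁻¹) = γ * (a * a) * γ⁻¹ by group, ha2]
      group
  | one => exact mul_one 1
  | mul x y hx hy ihx ihy =>
    calc x * y * (x * y) = x * (y * x) * y := by group
      _ = x * x * (y * y) := by rw [← hcomm x hx y hy]; group
      _ = 1 := by rw [ihx, ihy, one_mul]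
  | inv x hx ih => rw [← mul_inv_rev, ih, inv_one]

theorem notMem_centerOf_of_mul_mem {D₁ D₂ D₃ : Subgroup G} (hD₁ : IsDent G Q D₁)
    (hD₂ : IsDent G Q D₂) (hD₃ : IsDent G Q D₃) (h₃₁ : D₃ ≠ D₁) (h₃₂ : D₃ ≠ D₂) {a b : G}
    (ha : a ∈ D₁) (hb : b ∈ D₂) (hab : a * b ∈ D₃) (habZ : a * b ∉ centerOf G Q) :
    a ∉ centerOf G Q ∧ b ∉ centerOf G Q :=
  ⟨fun haZ => habZ <|
      hD₃.mem_centerOf_of_mem_of_mem hD₂ h₃₂ hab (mul_mem (hD₂.center_lt.le haZ) hb),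
    fun hbZ => habZ <|
      hD₃.mem_centerOf_of_mem_of_mem hD₁ h₃₁ hab (mul_mem ha (hD₁.center_lt.le hbZ))⟩

theorem commutatorElement_mem_centerOf_of_mul (hG : IsBiextraspecial G Q m) {D₁ D₂ : Subgroup G}
    (hD₁ : IsDent G Q D₁) (hD₂ : IsDent G Q D₂) (hne : D₁ ≠ D₂) {t a b : G} (ha : a ∈ D₁)
    (hb : b ∈ D₂) (h : ⁅t, a * b⁆ ∈ centerOf G Q) :
    ⁅t, a⁆ ∈ centerOf G Q ∧ ⁅t, b⁆ ∈ centerOf G Q := by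
  have hZ := hG.centerOf_normal
  have := hD₁.normal
  have := hD₂.normal
  have hsplit : ⁅t, a * b⁆ = ⁅t, a⁆ * (a * ⁅t, b⁆ * a⁻¹) := by
    rw [commutatorElement_mul_right_eq_mul_conj]; group
  have hta : ⁅t, a⁆ ∈ centerOf G Q := by
    refine hD₁.mem_centerOf_of_mem_of_mem hD₂ hne (commutatorElement_mem_of_normal t ha) ?_
    rw [show ⁅t, a⁆ = ⁅t, a * b⁆ * (a * ⁅t, b⁆ * a⁻¹)⁻¹ by rw [hsplit]; group]
    exact mul_mem (hD₂.center_lt.le h)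
      (inv_mem (hD₂.normal.conj_mem _ (commutatorElement_mem_of_normal t hb) a))
  have hconj : a * ⁅t, b⁆ * a⁻¹ ∈ centerOf G Q := by
    rw [show a * ⁅t, b⁆ * a⁻¹ = ⁅t, a⁆⁻¹ * ⁅t, a * b⁆ by rw [hsplit]; group]
    exact mul_mem (inv_mem hta) h
  exact ⟨hta, by simpa [mul_assoc] using hZ.conj_mem' _ hconj a⟩

end IsDent

/-- for distinct dents `D₁ ≠ D₂` with diagonal dent `D₃`: if
`[D₁,D₂] = 1` then the number of singular dents among the three is odd, and if
`[D₁,D₂] ≠ 1` then the number of non-singular dents among the three is odd. -/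
theorem stmt7 (G : Type*) [Group G] (Q : Subgroup G) (m : ℕ)
    (hG : IsBiextraspecial G Q m)
    (D₁ D₂ D₃ : Subgroup G) (hdiag : IsDiagonal G Q D₁ D₂ D₃) :
    (DentsCommute G D₁ D₂ →
      ((IsSingularDent G D₁ ∧ IsSingularDent G D₂ ∧ IsSingularDent G D₃) ∨
        (IsSingularDent G D₁ ∧ ¬IsSingularDent G D₂ ∧ ¬IsSingularDent G D₃) ∨
        (¬IsSingularDent G D₁ ∧ IsSingularDent G D₂ ∧ ¬IsSingularDent G D₃) ∨
        (¬IsSingularDent G D₁ ∧ ¬IsSingularDent G D₂ ∧ IsSingularDent G D₃))) ∧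
    (¬DentsCommute G D₁ D₂ →
      ((¬IsSingularDent G D₁ ∧ ¬IsSingularDent G D₂ ∧ ¬IsSingularDent G D₃) ∨
        (¬IsSingularDent G D₁ ∧ IsSingularDent G D₂ ∧ IsSingularDent G D₃) ∨
        (IsSingularDent G D₁ ∧ ¬IsSingularDent G D₂ ∧ IsSingularDent G D₃) ∨
        (IsSingularDent G D₁ ∧ IsSingularDent G D₂ ∧ ¬IsSingularDent G D₃))) := by
  obtain ⟨hD₁, hD₂, hD₃, h₁₂, h₃₁, h₃₂, h₃⟩ := hdiag
  obtain ⟨g, t, hg, ht, ht2, hgen⟩ := hG.exists_generators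
  obtain ⟨x, hx, hxZ, htx⟩ := hD₃.exists_mem_commutatorElement_mem hG ht2
  have := hD₂.normal
  obtain ⟨a, ha, b, hb, rfl⟩ := Subgroup.mem_sup_of_normal_right.mp (h₃ hx)
  obtain ⟨haZ, hbZ⟩ := hD₁.notMem_centerOf_of_mul_mem hD₂ hD₃ h₃₁ h₃₂ ha hb hx hxZ
  obtain ⟨hta, htb⟩ := hD₁.commutatorElement_mem_centerOf_of_mul hG hD₂ h₁₂ ha hb htx
  have haQ := hD₁.lt_Q.le ha
  have hbQ := hD₂.lt_Q.le hb
  have hsq {u : G} (hu : u ∈ Q) (htu : ⁅t, u⁆ ∈ centerOf G Q) :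
      u * u ∈ centerOf G Q ⊓ Subgroup.centralizer {t} :=
    ⟨hG.sq_mem_center u hu, hG.mul_self_mem_centralizer hu htu⟩
  have hparity := parity_of_mem_of_card_dvd_two (hG.card_centerOf_inf_centralizer_dvd_two ht)
    ⟨hG.comm_mem_center a haQ b hbQ, hG.commutatorElement_mem_centralizer haQ hbQ hta htb⟩
    (hsq haQ hta) (hsq hbQ htb)
  simp only [← mul_mul_self_eq_commutatorElement_mul
      (commute_of_mem_centerOf hbQ (hG.sq_mem_center a haQ)).symm,
    ne_eq, commutatorElement_eq_one_iff_commute] at hparity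
  have hcomm : DentsCommute G D₁ D₂ ↔ Commute a b :=
    ⟨fun h => h a ha b hb, hD₁.dentsCommute_of_commute hG hg hgen hD₂ ha haZ hb hbZ htb⟩
  rwa [hcomm, hD₁.isSingularDent_iff hG hg hgen ha haZ hta,
    hD₂.isSingularDent_iff hG hg hgen hb hbZ htb, hD₃.isSingularDent_iff hG hg hgen hx hxZ htx]
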